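/- Let (Ω, 𝔉) be a measurable space, μ¹ and μ² finite measures on Ω, L ≥ 0, and g : ℝ → ℝ an L-Lipschitz function. Let x¹, x², y¹, y² : Ω → ℝ be bounded measurable functions such that y¹(ω) ≥ g(x¹(ω)) and y²(ω) ≥ g(x²(ω)) for every ω, and suppose the Skorokhod conditions ∫ (y¹ − g∘x¹) dμ¹ = 0 and ∫ (y² − g∘x²) dμ² = 0 hold. Then ∫ (y¹ − y²) dμ¹ + ∫ (y² − y¹) dμ² ≤ L ( ∫ |x¹ − x²| dμ¹ + ∫ |x¹ − x²| dμ² ). -/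

import Mathlib

open MeasureTheory

private lemma integrable_of_bdd' {Ω : Type*} [MeasurableSpace Ω] (μ : Measure Ω)
    [IsFiniteMeasure μ] {f : Ω → ℝ} (hm : Measurable f) (hb : ∃ C, ∀ ω, |f ω| ≤ C) :
    Integrable f μ := by
  obtain ⟨C, hC⟩ := hb
  exact ⟨hm.aestronglyMeasurable,
    HasFiniteIntegral.of_bounded (C := C) (Filter.Eventually.of_forall hC)⟩

private lemma skor_key {Ω : Type*} [MeasurableSpace Ω] (μ : Measure Ω)
    [IsFiniteMeasure μ]
    (L : ℝ) (g : ℝ → ℝ)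
    (hg : ∀ a b : ℝ, |g a - g b| ≤ L * |a - b|)
    (x1 x2 y1 y2 : Ω → ℝ)
    (hx1m : Measurable x1) (hx2m : Measurable x2)
    (hy1m : Measurable y1) (hy2m : Measurable y2)
    (hx1b : ∃ C, ∀ ω, |x1 ω| ≤ C) (hx2b : ∃ C, ∀ ω, |x2 ω| ≤ C)
    (hy1b : ∃ C, ∀ ω, |y1 ω| ≤ C) (hy2b : ∃ C, ∀ ω, |y2 ω| ≤ C)
    (h2 : ∀ ω, g (x2 ω) ≤ y2 ω)
    (hSkor : ∫ ω, (y1 ω - g (x1 ω)) ∂μ = 0) :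
    (∫ ω, (y1 ω - y2 ω) ∂μ) ≤ L * ∫ ω, |x1 ω - x2 ω| ∂μ := by
  have hL : 0 ≤ L := by
    have := (abs_nonneg (g 1 - g 0)).trans (hg 1 0)
    simpa using this
  have hgcont : Continuous g := by
    have : LipschitzWith ⟨L, hL⟩ g := by
      apply LipschitzWith.of_dist_le_mul
      intro a b
      simp only [Real.dist_eq]; exact hg a b
    exact this.continuous
  have hbdd : ∀ (x : Ω → ℝ), (∃ C, ∀ ω, |x ω| ≤ C) → ∃ C, ∀ ω, |g (x ω)| ≤ C := by
    rintro x ⟨C, hC⟩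
    refine ⟨L * C + |g 0|, fun ω => ?_⟩
    calc |g (x ω)| ≤ |g (x ω) - g 0| + |g 0| := by
          simpa using abs_add_le (g (x ω) - g 0) (g 0)
      _ ≤ L * |x ω - 0| + |g 0| := by linarith [hg (x ω) 0]
      _ ≤ L * C + |g 0| := by
          have := hC ω
          have : L * |x ω - 0| ≤ L * C := by
            apply mul_le_mul_of_nonneg_left _ hL
            simpa using hC ω
          linarith
  have igx1 : Integrable (fun ω => g (x1 ω)) μ :=
    integrable_of_bdd' μ (hgcont.measurable.comp hx1m) (hbdd x1 hx1b)
  have igx2 : Integrable (fun ω => g (x2 ω)) μ :=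
    integrable_of_bdd' μ (hgcont.measurable.comp hx2m) (hbdd x2 hx2b)
  have iy1 : Integrable y1 μ := integrable_of_bdd' μ hy1m hy1b
  have iy2 : Integrable y2 μ := integrable_of_bdd' μ hy2m hy2b
  have iabs : Integrable (fun ω => L * |x1 ω - x2 ω|) μ := by
    refine integrable_of_bdd' μ ?_ ?_
    · exact (measurable_const.mul ((hx1m.sub hx2m).abs))
    · obtain ⟨C1, hC1⟩ := hx1b
      obtain ⟨C2, hC2⟩ := hx2b
      refine ⟨L * (C1 + C2), fun ω => ?_⟩
      rw [abs_of_nonneg (by positivity)]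
      apply mul_le_mul_of_nonneg_left _ hL
      calc |x1 ω - x2 ω| ≤ |x1 ω| + |x2 ω| := abs_sub _ _
        _ ≤ C1 + C2 := add_le_add (hC1 ω) (hC2 ω)
  have split : (∫ ω, (y1 ω - y2 ω) ∂μ)
      = (∫ ω, (y1 ω - g (x1 ω)) ∂μ) + ∫ ω, (g (x1 ω) - y2 ω) ∂μ := by
    have e1 := integral_sub iy1 iy2
    have e2 := integral_sub iy1 igx1
    have e3 := integral_sub igx1 iy2
    linarith
  rw [split, hSkor, zero_add]
  calc (∫ ω, (g (x1 ω) - y2 ω) ∂μ) ≤ ∫ ω, (g (x1 ω) - g (x2 ω)) ∂μ := by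
        apply integral_mono (igx1.sub iy2) (igx1.sub igx2)
        intro ω
        have := h2 ω
        simp only [Pi.sub_apply]
        linarith
    _ ≤ ∫ ω, L * |x1 ω - x2 ω| ∂μ := by
        apply integral_mono (igx1.sub igx2) iabs
        intro ω
        have := hg (x1 ω) (x2 ω)
        have := le_abs_self (g (x1 ω) - g (x2 ω))
        simp only [Pi.sub_apply]
        linarith
    _ = L * ∫ ω, |x1 ω - x2 ω| ∂μ := integral_const_mul _ _

theorem skorokhod_two_measure_comparison
    {Ω : Type*} [MeasurableSpace Ω] (μ1 μ2 : Measure Ω)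
    [IsFiniteMeasure μ1] [IsFiniteMeasure μ2]
    (L : ℝ) (hL : 0 ≤ L) (g : ℝ → ℝ)
    (hg : ∀ a b : ℝ, |g a - g b| ≤ L * |a - b|)
    (x1 x2 y1 y2 : Ω → ℝ)
    (hx1m : Measurable x1) (hx2m : Measurable x2)
    (hy1m : Measurable y1) (hy2m : Measurable y2)
    (hx1b : ∃ C, ∀ ω, |x1 ω| ≤ C) (hx2b : ∃ C, ∀ ω, |x2 ω| ≤ C)
    (hy1b : ∃ C, ∀ ω, |y1 ω| ≤ C) (hy2b : ∃ C, ∀ ω, |y2 ω| ≤ C)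
    (h1 : ∀ ω, g (x1 ω) ≤ y1 ω) (h2 : ∀ ω, g (x2 ω) ≤ y2 ω)
    (hSkor1 : ∫ ω, (y1 ω - g (x1 ω)) ∂μ1 = 0)
    (hSkor2 : ∫ ω, (y2 ω - g (x2 ω)) ∂μ2 = 0) :
    (∫ ω, (y1 ω - y2 ω) ∂μ1) + (∫ ω, (y2 ω - y1 ω) ∂μ2) ≤
      L * ((∫ ω, |x1 ω - x2 ω| ∂μ1) + (∫ ω, |x1 ω - x2 ω| ∂μ2)) := by
  have A := skor_key μ1 L g hg x1 x2 y1 y2 hx1m hx2m hy1m hy2m hx1b hx2b hy1b hy2b h2 hSkor1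
  have B := skor_key μ2 L g (fun a b => hg a b) x2 x1 y2 y1 hx2m hx1m hy2m hy1m hx2b hx1b
    hy2b hy1b h1 hSkor2
  have habs : (∫ ω, |x2 ω - x1 ω| ∂μ2) = ∫ ω, |x1 ω - x2 ω| ∂μ2 := by
    congr 1; ext ω; exact abs_sub_comm _ _
  rw [habs] at B
  nlinarith [A, B]
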